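/- arXiv:1712.08963 — 10 statements merged into one kernel-verified Lean document; each statement's English description precedes it below -/
import Mathlib

section
/- For submodular monotone set functions β and γ on subsets of a finite set V, define the iterative pruning sequences A_0 = ∅, B_0 = V, A_{t+1} = A_t ∪ {v ∈ B_t \ A_t : β(B_t) − β(B_t \ {v}) − (γ(A_t ∪ {v}) − γ(A_t)) > 0}, and B_{t+1} = B_t \ {v ∈ B_t \ A_t : β(A_t ∪ {v}) − β(A_t) − (γ(B_t) − γ(B_t \ {v})) < 0}. Then for every t ≥ 0, A_t ⊆ A_{t+1} ⊆ B_{t+1} ⊆ B_t. -/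
/-! Submodularity of β and γ, applied to `A ⊆ B \ {v}` with `v ∈ B \ A`, bounds the marginal gains
at `B` by those at `A`; hence the score deciding whether `v` joins `A` is at most the score deciding
whether `v` leaves `B`, so no element can do both and the invariant `A t ⊆ B t` propagates. -/

open Finset

def Submodular {V : Type*} [DecidableEq V] (f : Finset V → ℝ) : Prop :=
  ∀ S T : Finset V, ∀ v, S ⊆ T → v ∉ T → f (insert v T) - f T ≤ f (insert v S) - f S

def MonotoneSet {V : Type*} [DecidableEq V] (f : Finset V → ℝ) : Prop :=
  ∀ S T : Finset V, S ⊆ T → f S ≤ f T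

theorem Submodular.sub_sdiff_singleton_le {V : Type*} [DecidableEq V] {f : Finset V → ℝ}
    (hf : Submodular f) {S T : Finset V} {v : V} (hST : S ⊆ T) (hvT : v ∈ T) (hvS : v ∉ S) :
    f T - f (T \ {v}) ≤ f (insert v S) - f S := by
  have hS : S ⊆ T \ {v} := fun x hx =>
    mem_sdiff.2 ⟨hST hx, fun hxv => hvS (mem_singleton.1 hxv ▸ hx)⟩
  have h := hf S (T \ {v}) v hS (by simp)
  rwa [← erase_eq, insert_erase hvT, erase_eq] at h

theorem pruning_gain_le_loss {V : Type*} [DecidableEq V] {β γ : Finset V → ℝ}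
    (hβ : Submodular β) (hγ : Submodular γ) {A B : Finset V} {v : V}
    (hAB : A ⊆ B) (hvB : v ∈ B) (hvA : v ∉ A) :
    β B - β (B \ {v}) - (γ (insert v A) - γ A) ≤
      β (insert v A) - β A - (γ B - γ (B \ {v})) := by
  linarith [hβ.sub_sdiff_singleton_le hAB hvB hvA, hγ.sub_sdiff_singleton_le hAB hvB hvA]

theorem pruning_chain_general {V : Type*} [DecidableEq V]
    (β γ : Finset V → ℝ)
    (hβ : Submodular β) (hγ : Submodular γ)
    (A B : ℕ → Finset V)
    (hA0 : A 0 = ∅)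
    (hA : ∀ t v, v ∈ A (t+1) ↔ v ∈ A t ∨ (v ∈ B t ∧ v ∉ A t ∧
      β (B t) - β (B t \ {v}) - (γ (insert v (A t)) - γ (A t)) > 0))
    (hB : ∀ t v, v ∈ B (t+1) ↔ v ∈ B t ∧ ¬ (v ∈ B t ∧ v ∉ A t ∧
      β (insert v (A t)) - β (A t) - (γ (B t) - γ (B t \ {v})) < 0)) :
    ∀ t, A t ⊆ A (t+1) ∧ A (t+1) ⊆ B (t+1) ∧ B (t+1) ⊆ B t := by
  have step : ∀ t, A t ⊆ B t → A (t+1) ⊆ B (t+1) := by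
    intro t hAB v hv
    rcases (hA t v).1 hv with hvA | ⟨hvB, hvA, hgain⟩
    · exact (hB t v).2 ⟨hAB hvA, fun h => h.2.1 hvA⟩
    · refine (hB t v).2 ⟨hvB, fun ⟨_, _, hloss⟩ => ?_⟩
      linarith [pruning_gain_le_loss hβ hγ hAB hvB hvA]
  have hAB : ∀ t, A t ⊆ B t := by
    intro t
    induction t with
    | zero => simp [hA0]
    | succ t ih => exact step t ih
  exact fun t => ⟨fun v hv => (hA t v).2 (Or.inl hv), step t (hAB t),
    fun v hv => ((hB t v).1 hv).1⟩

theorem pruning_chain {V : Type*} [Fintype V] [DecidableEq V]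
    (β γ : Finset V → ℝ)
    (hβ : Submodular β) (hγ : Submodular γ)
    (hβm : MonotoneSet β) (hγm : MonotoneSet γ)
    (hβ0 : β ∅ = 0) (hγ0 : γ ∅ = 0)
    (A B : ℕ → Finset V)
    (hA0 : A 0 = ∅) (hB0 : B 0 = Finset.univ)
    (hA : ∀ t v, v ∈ A (t+1) ↔ v ∈ A t ∨ (v ∈ B t ∧ v ∉ A t ∧
      β (B t) - β (B t \ {v}) - (γ (insert v (A t)) - γ (A t)) > 0))
    (hB : ∀ t v, v ∈ B (t+1) ↔ v ∈ B t ∧ ¬ (v ∈ B t ∧ v ∉ A t ∧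
      β (insert v (A t)) - β (A t) - (γ (B t) - γ (B t \ {v})) < 0)) :
    ∀ t, A t ⊆ A (t+1) ∧ A (t+1) ⊆ B (t+1) ∧ B (t+1) ⊆ B t :=
  pruning_chain_general β γ hβ hγ A B hA0 hA hB
end

section
/- With the iterative pruning sequences A_t, B_t as defined (A_0 = ∅, B_0 = V, A_{t+1} adds nodes v ∈ B_t \ A_t with β(v | B_t \ {v}) − γ(v | A_t) > 0, B_{t+1} removes nodes v ∈ B_t \ A_t with β(v | A_t) − γ(v | B_t \ {v}) < 0), let φ = β − γ and for any S ⊆ V set S_t = (S ∩ B_t) ∪ A_t. Then φ(S_t) ≤ φ(S_{t+1}) for all t ≥ 0, with equality if and only if S_t = S_{t+1}. -/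
/-!
Fix a round `t` and work in the interval `[A t, B t]`, which contains both `S_t` and `S_{t+1}`.
By submodularity of `β` and `γ`, the marginal gain `φ(v | Z)` of a node over `Z` in that interval
is at least `β(v | B_t \ {v}) − γ(v | A_t)` and at most `β(v | A_t) − γ(v | B_t \ {v})`. Hence
every node in `S_{t+1} \ S_t` (newly added to `A`) strictly increases `φ` wherever it is added
inside the interval, and every node in `S_t \ S_{t+1}` (newly removed from `B`) strictly decreases
it. Passing from `S_t` to `S_t ∪ S_{t+1}` by adding nodes one at a time, and then down to
`S_{t+1}` by removing nodes one at a time, never decreases `φ` and strictly increases it unless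
`S_t = S_{t+1}`.
-/

open Finset

section

variable {V : Type*} [DecidableEq V]

def IsStrictGain (φ : Finset V → ℝ) (L U : Finset V) (v : V) : Prop :=
  ∀ Z, L ⊆ Z → Z ⊆ U → v ∉ Z → φ Z < φ (insert v Z)

theorem isStrictGain_sub_of_submodular {β γ : Finset V → ℝ} (hβ : Submodular β)
    (hγ : Submodular γ) {L U : Finset V} {v : V} (hv : v ∈ U)
    (h : β U - β (U \ {v}) - (γ (insert v L) - γ L) > 0) :
    IsStrictGain (β - γ) L U v := by
  intro Z hLZ hZU hvZ
  have hZU' : Z ⊆ U.erase v := fun x hx => mem_erase.2 ⟨ne_of_mem_of_not_mem hx hvZ, hZU hx⟩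
  have hβv := hβ Z (U.erase v) v hZU' (notMem_erase v U)
  have hγv := hγ L Z v hLZ hvZ
  rw [insert_erase hv] at hβv
  rw [sdiff_singleton_eq_erase] at h
  simp only [Pi.sub_apply]
  linarith

theorem lt_of_ssubset_of_isStrictGain {φ : Finset V → ℝ} {L U Z W : Finset V} (hLZ : L ⊆ Z)
    (hWU : W ⊆ U) (hZW : Z ⊂ W) (hgain : ∀ v ∈ W \ Z, IsStrictGain φ L U v) : φ Z < φ W := by
  induction W using Finset.strongInduction with
  | H W ih =>
    obtain ⟨a, haW, haZ⟩ := exists_of_ssubset hZW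
    have hZW' : Z ⊆ W.erase a := fun x hx => mem_erase.2 ⟨ne_of_mem_of_not_mem hx haZ, hZW.1 hx⟩
    have hWU' : W.erase a ⊆ U := (erase_subset a W).trans hWU
    have hstep : φ (W.erase a) < φ W := by
      simpa only [insert_erase haW] using
        hgain a (mem_sdiff.2 ⟨haW, haZ⟩) _ (hLZ.trans hZW') hWU' (notMem_erase a W)
    rcases hZW'.eq_or_ssubset with rfl | hZW'
    · exact hstep
    · refine (ih _ (erase_ssubset haW) hWU' hZW' fun v hv => hgain v ?_).trans hstep
      exact sdiff_subset_sdiff (erase_subset a W) subset_rfl hv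

theorem le_of_subset_of_isStrictGain {φ : Finset V → ℝ} {L U Z W : Finset V} (hLZ : L ⊆ Z)
    (hWU : W ⊆ U) (hZW : Z ⊆ W) (hgain : ∀ v ∈ W \ Z, IsStrictGain φ L U v) : φ Z ≤ φ W := by
  rcases hZW.eq_or_ssubset with rfl | hZW
  · exact le_rfl
  · exact (lt_of_ssubset_of_isStrictGain hLZ hWU hZW hgain).le

theorem le_and_eq_iff_of_isStrictGain {φ : Finset V → ℝ} {L U X Y : Finset V} (hLX : L ⊆ X)
    (hXU : X ⊆ U) (hLY : L ⊆ Y) (hYU : Y ⊆ U) (hgain : ∀ v ∈ Y \ X, IsStrictGain φ L U v)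
    (hloss : ∀ v ∈ X \ Y, IsStrictGain (-φ) L U v) :
    φ X ≤ φ Y ∧ (φ X = φ Y ↔ X = Y) := by
  have hlt : X = Y ∨ φ X < φ Y := by
    by_cases hYX : Y ⊆ X
    · rcases hYX.eq_or_ssubset with rfl | hYX
      · exact .inl rfl
      · simpa only [Pi.neg_apply, neg_lt_neg_iff] using
          Or.inr (lt_of_ssubset_of_isStrictGain hLY hXU hYX hloss)
    · have hXYU : X ∪ Y ⊆ U := union_subset hXU hYU
      have hup : φ X < φ (X ∪ Y) :=
        lt_of_ssubset_of_isStrictGain hLX hXYU (Finset.ssubset_iff_subset_ne.2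
          ⟨subset_union_left, fun h => hYX (h ▸ subset_union_right)⟩)
          (by rwa [union_sdiff_left])
      have hdown : -φ Y ≤ -φ (X ∪ Y) :=
        le_of_subset_of_isStrictGain hLY hXYU subset_union_right (by rwa [union_sdiff_right])
      simp only [neg_le_neg_iff] at hdown
      exact .inr (hup.trans_le hdown)
  rcases hlt with rfl | hlt
  · exact ⟨le_rfl, iff_of_true rfl rfl⟩
  · exact ⟨hlt.le, iff_of_false hlt.ne fun h => hlt.ne (congrArg φ h)⟩

end

theorem pruning_improves_general {V : Type*} [DecidableEq V]
    (β γ : Finset V → ℝ)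
    (hβ : Submodular β) (hγ : Submodular γ)
    (A B : ℕ → Finset V)
    (hA : ∀ t v, v ∈ A (t+1) ↔ v ∈ A t ∨ (v ∈ B t ∧ v ∉ A t ∧
      β (B t) - β (B t \ {v}) - (γ (insert v (A t)) - γ (A t)) > 0))
    (hB : ∀ t v, v ∈ B (t+1) ↔ v ∈ B t ∧ ¬ (v ∈ B t ∧ v ∉ A t ∧
      β (insert v (A t)) - β (A t) - (γ (B t) - γ (B t \ {v})) < 0))
    (hchain : ∀ t, A t ⊆ A (t+1) ∧ A (t+1) ⊆ B (t+1) ∧ B (t+1) ⊆ B t)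
    (φ : Finset V → ℝ) (hφ : ∀ S, φ S = β S - γ S)
    (S : Finset V) (St : ℕ → Finset V) (hSt : ∀ t, St t = (S ∩ B t) ∪ A t) :
    ∀ t, φ (St t) ≤ φ (St (t+1)) ∧ (φ (St t) = φ (St (t+1)) ↔ St t = St (t+1)) := by
  obtain rfl : φ = β - γ := funext hφ
  intro t
  obtain ⟨hAA, hAB, hBB⟩ := hchain t
  have hgain : ∀ v ∈ A (t+1) \ A t, IsStrictGain (β - γ) (A t) (B t) v := by
    intro v hv
    rw [mem_sdiff, hA] at hv
    obtain ⟨hvA | ⟨hvB, -, hv⟩, hvA'⟩ := hv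
    exacts [absurd hvA hvA', isStrictGain_sub_of_submodular hβ hγ hvB hv]
  have hloss : ∀ v ∈ B t \ B (t+1), IsStrictGain (-(β - γ)) (A t) (B t) v := by
    intro v hv
    rw [mem_sdiff, hB] at hv
    obtain ⟨hvB, hvB'⟩ := hv
    have hv : β (insert v (A t)) - β (A t) - (γ (B t) - γ (B t \ {v})) < 0 := by
      by_contra h
      exact hvB' ⟨hvB, fun h' => h h'.2.2⟩
    rw [neg_sub]
    exact isStrictGain_sub_of_submodular hγ hβ hvB (by linarith)
  rw [hSt, hSt]
  exact le_and_eq_iff_of_isStrictGain subset_union_right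
    (union_subset inter_subset_right (hAA.trans (hAB.trans hBB))) (hAA.trans subset_union_right)
    (union_subset (inter_subset_right.trans hBB) (hAB.trans hBB))
    (fun v hv => hgain v (by grind)) (fun v hv => hloss v (by grind))

theorem pruning_improves {V : Type*} [Fintype V] [DecidableEq V]
    (β γ : Finset V → ℝ)
    (hβ : Submodular β) (hγ : Submodular γ)
    (A B : ℕ → Finset V)
    (hA0 : A 0 = ∅) (hB0 : B 0 = Finset.univ)
    (hA : ∀ t v, v ∈ A (t+1) ↔ v ∈ A t ∨ (v ∈ B t ∧ v ∉ A t ∧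
      β (B t) - β (B t \ {v}) - (γ (insert v (A t)) - γ (A t)) > 0))
    (hB : ∀ t v, v ∈ B (t+1) ↔ v ∈ B t ∧ ¬ (v ∈ B t ∧ v ∉ A t ∧
      β (insert v (A t)) - β (A t) - (γ (B t) - γ (B t \ {v})) < 0))
    (hchain : ∀ t, A t ⊆ A (t+1) ∧ A (t+1) ⊆ B (t+1) ∧ B (t+1) ⊆ B t)
    (φ : Finset V → ℝ) (hφ : ∀ S, φ S = β S - γ S)
    (S : Finset V) (St : ℕ → Finset V) (hSt : ∀ t, St t = (S ∩ B t) ∪ A t) :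
    ∀ t, φ (St t) ≤ φ (St (t+1)) ∧ (φ (St t) = φ (St (t+1)) ↔ St t = St (t+1)) :=
  pruning_improves_general β γ hβ hγ A B hA hB hchain φ hφ S St hSt
end

section
/- Let A*, B* be the fixed point of the iterative pruning procedure (A_0 = ∅, B_0 = V, with the update rules adding v to A when β(v | B_t \ {v}) − γ(v | A_t) > 0 and removing v from B when β(v | A_t) − γ(v | B_t \ {v}) < 0, iterated until convergence). Then for any S ⊆ V with not A* ⊆ S ⊆ B*, we have φ(S) < φ((S ∩ B*) ∪ A*), where φ = β − γ. -/
/-!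
Every update of the pruning sequence is certified by submodularity: an element added at step
`t` has positive marginal gain for `φ = β - γ` on every set between `A t` and `B t`, and a
removed element has negative marginal gain there. Hence, starting from any set in `[A t, B t]`,
first adding the new elements of `A (t+1)` and then deleting the elements dropped from `B t`
never decreases `φ`, and strictly increases it unless the set already lies in
`[A (t+1), B (t+1)]`. Since the clamping maps `S ↦ S ∩ B t ∪ A t` compose along the (nested)
sequence of intervals, induction on `t` gives `φ S < φ (S ∩ B t ∪ A t)` for every `S` outside
`[A t, B t]`.
-/

open Finset

section Pruning

variable {V : Type*} [DecidableEq V]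

theorem Submodular.sub_sdiff_singleton_le_s2 {f : Finset V → ℝ} (hf : Submodular f)
    {X U : Finset V} {v : V} (hXU : X ⊆ U) (hvU : v ∈ U) (hvX : v ∉ X) :
    f U - f (U \ {v}) ≤ f (insert v X) - f X := by
  rw [sdiff_singleton_eq_erase]
  have h := hf X (U.erase v) v (fun x hx => mem_erase.2 ⟨by rintro rfl; exact hvX hx, hXU hx⟩)
    (notMem_erase v U)
  rwa [insert_erase hvU] at h

section Monotone

variable {f : Finset V → ℝ} {L U X : Finset V}

theorem le_union_of_lt_insert {D : Finset V} (hDU : D ⊆ U)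
    (h : ∀ Y, L ⊆ Y → Y ⊆ U → ∀ v ∈ D, v ∉ Y → f Y < f (insert v Y))
    (hLX : L ⊆ X) (hXU : X ⊆ U) : f X ≤ f (X ∪ D) := by
  induction D using Finset.induction_on with
  | empty => simp
  | insert a D _ ih =>
    have hD : D ⊆ U := (subset_insert a D).trans hDU
    have ih := ih hD fun Y hLY hYU v hv => h Y hLY hYU v (mem_insert_of_mem hv)
    rw [union_insert]
    by_cases ha : a ∈ X ∪ D
    · rwa [insert_eq_of_mem ha]
    · exact ih.trans (h _ (hLX.trans subset_union_left) (union_subset hXU hD) a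
        (mem_insert_self a D) ha).le

theorem lt_union_of_lt_insert {D : Finset V} (hDU : D ⊆ U)
    (h : ∀ Y, L ⊆ Y → Y ⊆ U → ∀ v ∈ D, v ∉ Y → f Y < f (insert v Y))
    (hLX : L ⊆ X) (hXU : X ⊆ U) {v : V} (hvD : v ∈ D) (hvX : v ∉ X) :
    f X < f (X ∪ D) := calc
  f X < f (insert v X) := h X hLX hXU v hvD hvX
  _ ≤ f (insert v X ∪ D) := le_union_of_lt_insert hDU h
    (hLX.trans (subset_insert v X)) (insert_subset (hDU hvD) hXU)
  _ = f (X ∪ D) := by rw [insert_union, insert_eq_of_mem (mem_union_right X hvD)]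

theorem le_sdiff_of_lt_erase {R : Finset V} (hLR : Disjoint L R)
    (h : ∀ Y, L ⊆ Y → Y ⊆ U → ∀ v ∈ R, v ∈ Y → f Y < f (Y.erase v))
    (hLX : L ⊆ X) (hXU : X ⊆ U) : f X ≤ f (X \ R) := by
  induction R using Finset.induction_on with
  | empty => simp
  | insert a R _ ih =>
    have hLR' : Disjoint L R := hLR.mono_right (subset_insert a R)
    have ih := ih hLR' fun Y hLY hYU v hv => h Y hLY hYU v (mem_insert_of_mem hv)
    rw [sdiff_insert]
    by_cases ha : a ∈ X \ R
    · exact ih.trans (h _ (subset_sdiff.2 ⟨hLX, hLR'⟩) (sdiff_subset.trans hXU) a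
        (mem_insert_self a R) ha).le
    · rwa [erase_eq_of_notMem ha]

theorem lt_sdiff_of_lt_erase {R : Finset V} (hLR : Disjoint L R)
    (h : ∀ Y, L ⊆ Y → Y ⊆ U → ∀ v ∈ R, v ∈ Y → f Y < f (Y.erase v))
    (hLX : L ⊆ X) (hXU : X ⊆ U) {v : V} (hvR : v ∈ R) (hvX : v ∈ X) :
    f X < f (X \ R) := calc
  f X < f (X.erase v) := h X hLX hXU v hvR hvX
  _ ≤ f (X.erase v \ R) := le_sdiff_of_lt_erase hLR h
    (fun x hx => mem_erase.2 ⟨by rintro rfl; exact disjoint_left.1 hLR hx hvR, hLX hx⟩)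
    ((erase_subset v X).trans hXU)
  _ = f (X \ R) := by rw [erase_sdiff_comm, erase_eq_of_notMem (fun h => (mem_sdiff.1 h).2 hvR)]

end Monotone

theorem union_sdiff_sdiff_eq_inter_union {X U L U' : Finset V} (hXU : X ⊆ U) (hLU' : L ⊆ U') :
    (X ∪ L) \ (U \ U') = X ∩ U' ∪ L := by
  ext x
  have := @hXU x
  have := @hLU' x
  simp only [mem_sdiff, mem_union, mem_inter]
  tauto

theorem inter_union_inter_union_of_subset {S L U L' U' : Finset V} (hL : L ⊆ L') (hU : U' ⊆ U) :
    (S ∩ U ∪ L) ∩ U' ∪ L' = S ∩ U' ∪ L' := by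
  ext x
  have := @hL x
  have := @hU x
  simp only [mem_union, mem_inter]
  tauto

structure PruningRule (β γ : Finset V → ℝ) (A B : ℕ → Finset V) : Prop where
  mem_A_succ : ∀ t v, v ∈ A (t+1) ↔ v ∈ A t ∨ (v ∈ B t ∧ v ∉ A t ∧
    β (B t) - β (B t \ {v}) - (γ (insert v (A t)) - γ (A t)) > 0)
  mem_B_succ : ∀ t v, v ∈ B (t+1) ↔ v ∈ B t ∧ ¬ (v ∈ B t ∧ v ∉ A t ∧
    β (insert v (A t)) - β (A t) - (γ (B t) - γ (B t \ {v})) < 0)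

namespace PruningRule

variable {β γ : Finset V → ℝ} {A B : ℕ → Finset V} {t : ℕ}

theorem A_subset_succ (hP : PruningRule β γ A B) (t : ℕ) : A t ⊆ A (t+1) :=
  fun v hv => (hP.mem_A_succ t v).2 (Or.inl hv)

theorem B_succ_subset (hP : PruningRule β γ A B) (t : ℕ) : B (t+1) ⊆ B t :=
  fun v hv => ((hP.mem_B_succ t v).1 hv).1

theorem lt_insert (hP : PruningRule β γ A B) (hβ : Submodular β) (hγ : Submodular γ) :
    ∀ X, A t ⊆ X → X ⊆ B t → ∀ v ∈ A (t+1), v ∉ X → (β - γ) X < (β - γ) (insert v X) := by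
  intro X hAX hXB v hvA hvX
  obtain hvA | ⟨hvB, -, hgain⟩ := (hP.mem_A_succ t v).1 hvA
  · exact absurd (hAX hvA) hvX
  have hβX := hβ.sub_sdiff_singleton_le_s2 hXB hvB hvX
  have hγX := hγ (A t) X v hAX hvX
  simp only [Pi.sub_apply]
  linarith

theorem lt_erase (hP : PruningRule β γ A B) (hβ : Submodular β) (hγ : Submodular γ) :
    ∀ X, A t ⊆ X → X ⊆ B t → ∀ v ∈ B t \ B (t+1), v ∈ X → (β - γ) X < (β - γ) (X.erase v) := by
  intro X hAX hXB v hv hvX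
  obtain ⟨hvB, hvB'⟩ := mem_sdiff.1 hv
  obtain ⟨hvA, hloss⟩ : v ∉ A t ∧
      β (insert v (A t)) - β (A t) - (γ (B t) - γ (B t \ {v})) < 0 := by
    by_contra h
    exact hvB' ((hP.mem_B_succ t v).2 ⟨hvB, fun h' => h h'.2⟩)
  have hAX' : A t ⊆ X.erase v := fun x hx => mem_erase.2 ⟨by rintro rfl; exact hvA hx, hAX hx⟩
  have hβX := hβ (A t) (X.erase v) v hAX' (notMem_erase v X)
  have hγX := hγ.sub_sdiff_singleton_le_s2 ((erase_subset v X).trans hXB) hvB (notMem_erase v X)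
  rw [insert_erase hvX] at hβX hγX
  simp only [Pi.sub_apply]
  linarith

/-- A newly added element is never pruned in the same step: adding and then removing it would
strictly increase `β - γ` from `A t` back to `A t`. -/
theorem A_succ_subset_B_succ (hP : PruningRule β γ A B) (hβ : Submodular β)
    (hγ : Submodular γ) (hAB : A t ⊆ B t) : A (t+1) ⊆ B (t+1) := by
  intro v hvA
  by_cases hvAt : v ∈ A t
  · exact (hP.mem_B_succ t v).2 ⟨hAB hvAt, fun h => h.2.1 hvAt⟩
  have hvB : v ∈ B t := by
    obtain h | h := (hP.mem_A_succ t v).1 hvA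
    exacts [hAB h, h.1]
  by_contra hvB'
  have hadd := hP.lt_insert hβ hγ _ subset_rfl hAB v hvA hvAt
  have hdel := hP.lt_erase hβ hγ _ (subset_insert v _) (insert_subset hvB hAB) v
    (mem_sdiff.2 ⟨hvB, hvB'⟩) (mem_insert_self v _)
  rw [erase_insert hvAt] at hdel
  exact lt_asymm hadd hdel

theorem A_subset_B (hP : PruningRule β γ A B) (hβ : Submodular β) (hγ : Submodular γ)
    (hA0 : A 0 = ∅) : ∀ t, A t ⊆ B t
  | 0 => hA0 ▸ empty_subset _
  | t + 1 => hP.A_succ_subset_B_succ hβ hγ (hP.A_subset_B hβ hγ hA0 t)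

theorem lt_step (hP : PruningRule β γ A B) (hβ : Submodular β) (hγ : Submodular γ)
    {X : Finset V} (hAX : A t ⊆ X) (hXB : X ⊆ B t) (hX : ¬ (A (t+1) ⊆ X ∧ X ⊆ B (t+1))) :
    (β - γ) X < (β - γ) (X ∩ B (t+1) ∪ A (t+1)) := by
  have hAB' := hP.A_succ_subset_B_succ hβ hγ (hAX.trans hXB)
  have hA'B := hAB'.trans (hP.B_succ_subset t)
  have hdisj : Disjoint (A t) (B t \ B (t+1)) :=
    disjoint_sdiff.mono_left ((hP.A_subset_succ t).trans hAB')
  have hadd : (β - γ) X ≤ (β - γ) (X ∪ A (t+1)) :=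
    le_union_of_lt_insert hA'B (hP.lt_insert hβ hγ) hAX hXB
  have hdel : (β - γ) (X ∪ A (t+1)) ≤ (β - γ) ((X ∪ A (t+1)) \ (B t \ B (t+1))) :=
    le_sdiff_of_lt_erase hdisj (hP.lt_erase hβ hγ) (hAX.trans subset_union_left)
      (union_subset hXB hA'B)
  rw [← union_sdiff_sdiff_eq_inter_union hXB hAB']
  rw [not_and_or, not_subset, not_subset] at hX
  obtain ⟨v, hvA, hvX⟩ | ⟨v, hvX, hvB⟩ := hX
  · exact (lt_union_of_lt_insert hA'B (hP.lt_insert hβ hγ) hAX hXB hvA hvX).trans_le hdel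
  · exact hadd.trans_lt (lt_sdiff_of_lt_erase hdisj (hP.lt_erase hβ hγ)
      (hAX.trans subset_union_left) (union_subset hXB hA'B) (mem_sdiff.2 ⟨hXB hvX, hvB⟩)
      (mem_union_left _ hvX))

theorem le_step (hP : PruningRule β γ A B) (hβ : Submodular β) (hγ : Submodular γ)
    {X : Finset V} (hAX : A t ⊆ X) (hXB : X ⊆ B t) :
    (β - γ) X ≤ (β - γ) (X ∩ B (t+1) ∪ A (t+1)) := by
  by_cases hX : A (t+1) ⊆ X ∧ X ⊆ B (t+1)
  · rw [inter_eq_left.2 hX.2, union_eq_left.2 hX.1]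
  · exact (hP.lt_step hβ hγ hAX hXB hX).le

theorem lt_inter_union [Fintype V] (hP : PruningRule β γ A B) (hβ : Submodular β)
    (hγ : Submodular γ) (hA0 : A 0 = ∅) (hB0 : B 0 = univ) :
    ∀ t S, ¬ (A t ⊆ S ∧ S ⊆ B t) → (β - γ) S < (β - γ) (S ∩ B t ∪ A t)
  | 0, S, hS => absurd ⟨hA0 ▸ empty_subset S, hB0 ▸ subset_univ S⟩ hS
  | t + 1, S, hS => by
    by_cases h : A t ⊆ S ∧ S ⊆ B t
    · exact hP.lt_step hβ hγ h.1 h.2 hS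
    calc (β - γ) S < (β - γ) (S ∩ B t ∪ A t) := hP.lt_inter_union hβ hγ hA0 hB0 t S h
      _ ≤ (β - γ) ((S ∩ B t ∪ A t) ∩ B (t+1) ∪ A (t+1)) :=
        hP.le_step hβ hγ subset_union_right
          (union_subset inter_subset_right (hP.A_subset_B hβ hγ hA0 t))
      _ = (β - γ) (S ∩ B (t+1) ∪ A (t+1)) := by
        rw [inter_union_inter_union_of_subset (hP.A_subset_succ t) (hP.B_succ_subset t)]

end PruningRule

end Pruning

theorem pruning_fixed_point_improves_general {V : Type*} [Fintype V] [DecidableEq V]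
    (β γ : Finset V → ℝ)
    (hβ : Submodular β) (hγ : Submodular γ)
    (A B : ℕ → Finset V)
    (hA0 : A 0 = ∅) (hB0 : B 0 = Finset.univ)
    (hA : ∀ t v, v ∈ A (t+1) ↔ v ∈ A t ∨ (v ∈ B t ∧ v ∉ A t ∧
      β (B t) - β (B t \ {v}) - (γ (insert v (A t)) - γ (A t)) > 0))
    (hB : ∀ t v, v ∈ B (t+1) ↔ v ∈ B t ∧ ¬ (v ∈ B t ∧ v ∉ A t ∧
      β (insert v (A t)) - β (A t) - (γ (B t) - γ (B t \ {v})) < 0))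
    (Astar Bstar : Finset V) (T : ℕ)
    (hAconv : A T = Astar) (hBconv : B T = Bstar)
    (φ : Finset V → ℝ) (hφ : ∀ S, φ S = β S - γ S) :
    ∀ S : Finset V, ¬ (Astar ⊆ S ∧ S ⊆ Bstar) →
      φ S < φ ((S ∩ Bstar) ∪ Astar) := by
  intro S hS
  subst hAconv hBconv
  simpa only [hφ, Pi.sub_apply] using
    PruningRule.lt_inter_union ⟨hA, hB⟩ hβ hγ hA0 hB0 T S hS

theorem pruning_fixed_point_improves {V : Type*} [Fintype V] [DecidableEq V]
    (β γ : Finset V → ℝ)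
    (hβ : Submodular β) (hγ : Submodular γ)
    (A B : ℕ → Finset V)
    (hA0 : A 0 = ∅) (hB0 : B 0 = Finset.univ)
    (hA : ∀ t v, v ∈ A (t+1) ↔ v ∈ A t ∨ (v ∈ B t ∧ v ∉ A t ∧
      β (B t) - β (B t \ {v}) - (γ (insert v (A t)) - γ (A t)) > 0))
    (hB : ∀ t v, v ∈ B (t+1) ↔ v ∈ B t ∧ ¬ (v ∈ B t ∧ v ∉ A t ∧
      β (insert v (A t)) - β (A t) - (γ (B t) - γ (B t \ {v})) < 0))
    (Astar Bstar : Finset V) (T : ℕ)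
    (hAconv : A T = Astar) (hBconv : B T = Bstar)
    (hAfix : A (T+1) = Astar) (hBfix : B (T+1) = Bstar)
    (φ : Finset V → ℝ) (hφ : ∀ S, φ S = β S - γ S) :
    ∀ S : Finset V, ¬ (Astar ⊆ S ∧ S ⊆ Bstar) →
      φ S < φ ((S ∩ Bstar) ∪ Astar) :=
  pruning_fixed_point_improves_general β γ hβ hγ A B hA0 hB0 hA hB Astar Bstar T hAconv hBconv φ hφ
end

section
/- Let A*, B* be the converged sets of the iterative pruning procedure for φ = β − γ with β, γ submodular on subsets of a finite set V. Then every maximizer S* of φ over 2^V satisfies A* ⊆ S* ⊆ B*. -/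
/-!
Every maximizer `S` of `β - γ` is sandwiched as `A t ⊆ S ⊆ B t` at every step of the pruning.
If `v ∉ S` were added at step `t`, submodularity would bound the gain of inserting `v` into `S`
below by `β(v | B t \ {v}) - γ(v | A t) > 0`; if `v ∈ S` were removed, it would bound the gain of
erasing `v` from `S` below by `γ(v | B t \ {v}) - β(v | A t) > 0`. Either contradicts maximality.
-/

open Finset

namespace Submodular

variable {V : Type*} [DecidableEq V] {f : Finset V → ℝ} {S T : Finset V} {v : V}

-- Diminishing returns in a form that covers both `v ∈ S` and `v ∉ S`.
theorem sub_erase_le_insert_sub_erase (hf : Submodular f) (hST : S ⊆ T) (hvT : v ∈ T) :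
    f T - f (T.erase v) ≤ f (insert v S) - f (S.erase v) := by
  have h := hf (S.erase v) (T.erase v) v (erase_subset_erase v hST) (notMem_erase v T)
  have hS : insert v (S.erase v) = insert v S := by ext; simp only [mem_insert, mem_erase]; tauto
  rwa [insert_erase hvT, hS] at h

variable {β γ : Finset V → ℝ} {A B : Finset V}

theorem mem_of_maximizes_sub (hβ : Submodular β) (hγ : Submodular γ)
    (hmax : ∀ X, β X - γ X ≤ β S - γ S) (hAS : A ⊆ S) (hSB : S ⊆ B) (hvB : v ∈ B)
    (hgain : 0 < β B - β (B \ {v}) - (γ (insert v A) - γ A)) : v ∈ S := by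
  by_contra hvS
  have hβS := hβ.sub_erase_le_insert_sub_erase hSB hvB
  rw [erase_eq_of_notMem hvS] at hβS
  have hγS := hγ A S v hAS hvS
  have := hmax (insert v S)
  rw [sdiff_singleton_eq_erase] at hgain
  linarith

theorem notMem_of_maximizes_sub (hβ : Submodular β) (hγ : Submodular γ)
    (hmax : ∀ X, β X - γ X ≤ β S - γ S) (hAS : A ⊆ S) (hSB : S ⊆ B) (hvA : v ∉ A)
    (hloss : β (insert v A) - β A - (γ B - γ (B \ {v})) < 0) : v ∉ S := by
  intro hvS
  have hβS := hβ.sub_erase_le_insert_sub_erase hAS hvS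
  rw [erase_eq_of_notMem hvA] at hβS
  have hγS := hγ.sub_erase_le_insert_sub_erase hSB (hSB hvS)
  rw [insert_eq_of_mem hvS] at hγS
  have := hmax (S.erase v)
  rw [sdiff_singleton_eq_erase] at hloss
  linarith

end Submodular

theorem maximizers_in_lattice_general {V : Type*} [Fintype V] [DecidableEq V]
    (β γ : Finset V → ℝ)
    (hβ : Submodular β) (hγ : Submodular γ)
    (A B : ℕ → Finset V)
    (hA0 : A 0 = ∅) (hB0 : B 0 = Finset.univ)
    (hA : ∀ t v, v ∈ A (t+1) ↔ v ∈ A t ∨ (v ∈ B t ∧ v ∉ A t ∧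
      β (B t) - β (B t \ {v}) - (γ (insert v (A t)) - γ (A t)) > 0))
    (hB : ∀ t v, v ∈ B (t+1) ↔ v ∈ B t ∧ ¬ (v ∈ B t ∧ v ∉ A t ∧
      β (insert v (A t)) - β (A t) - (γ (B t) - γ (B t \ {v})) < 0))
    (Astar Bstar : Finset V) (T : ℕ)
    (hAconv : A T = Astar) (hBconv : B T = Bstar)
    (φ : Finset V → ℝ) (hφ : ∀ S, φ S = β S - γ S) :
    ∀ Sstar : Finset V, (∀ S : Finset V, φ S ≤ φ Sstar) →
      Astar ⊆ Sstar ∧ Sstar ⊆ Bstar := by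
  intro Sstar hmax
  simp only [hφ] at hmax
  have sandwich : ∀ t, A t ⊆ Sstar ∧ Sstar ⊆ B t := by
    intro t
    induction t with
    | zero => simp [hA0, hB0]
    | succ t ih =>
      obtain ⟨hAS, hSB⟩ := ih
      refine ⟨fun v hv => ?_, fun v hv => ?_⟩
      · rcases (hA t v).1 hv with hvA | ⟨hvB, -, hgain⟩
        · exact hAS hvA
        · exact hβ.mem_of_maximizes_sub hγ hmax hAS hSB hvB hgain
      · refine (hB t v).2 ⟨hSB hv, fun ⟨_, hvA, hloss⟩ => ?_⟩
        exact hβ.notMem_of_maximizes_sub hγ hmax hAS hSB hvA hloss hv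
  obtain ⟨hAS, hSB⟩ := sandwich T
  exact ⟨hAconv ▸ hAS, hBconv ▸ hSB⟩

theorem maximizers_in_lattice {V : Type*} [Fintype V] [DecidableEq V]
    (β γ : Finset V → ℝ)
    (hβ : Submodular β) (hγ : Submodular γ)
    (A B : ℕ → Finset V)
    (hA0 : A 0 = ∅) (hB0 : B 0 = Finset.univ)
    (hA : ∀ t v, v ∈ A (t+1) ↔ v ∈ A t ∨ (v ∈ B t ∧ v ∉ A t ∧
      β (B t) - β (B t \ {v}) - (γ (insert v (A t)) - γ (A t)) > 0))
    (hB : ∀ t v, v ∈ B (t+1) ↔ v ∈ B t ∧ ¬ (v ∈ B t ∧ v ∉ A t ∧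
      β (insert v (A t)) - β (A t) - (γ (B t) - γ (B t \ {v})) < 0))
    (Astar Bstar : Finset V) (T : ℕ)
    (hAconv : A T = Astar) (hBconv : B T = Bstar)
    (hAfix : A (T+1) = Astar) (hBfix : B (T+1) = Bstar)
    (φ : Finset V → ℝ) (hφ : ∀ S, φ S = β S - γ S) :
    ∀ Sstar : Finset V, (∀ S : Finset V, φ S ≤ φ Sstar) →
      Astar ⊆ Sstar ∧ Sstar ⊆ Bstar :=
  maximizers_in_lattice_general β γ hβ hγ A B hA0 hB0 hA hB Astar Bstar T hAconv hBconv φ hφ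
end

section
/- Let f : 2^V → ℝ be submodular and X, Y ⊆ V. Then m_X^1(Y) := f(X) − Σ_{v ∈ X \ Y} (f(V) − f(V \ {v})) + Σ_{v ∈ Y \ X} (f(X ∪ {v}) − f(X)) satisfies m_X^1(Y) ≥ f(Y), with equality when Y = X. -/
/-!
Adding the elements of `Y \ X` to `X` one at a time, each step gains at most its marginal value
at `X` (diminishing returns), so `f (X ∪ Y)` is at most `f X` plus the sum over `Y \ X`. Removing
the elements of `X \ Y` from `X ∪ Y` one at a time, each step loses at least its marginal value
at `V`, so `f Y` is at most `f (X ∪ Y)` minus the sum over `X \ Y`.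
-/

open Finset

namespace Submodular

variable {V : Type*} [DecidableEq V] {f : Finset V → ℝ}

theorem union_le_add_sum_marginal (hf : Submodular f) (S : Finset V) {A : Finset V}
    (hAS : Disjoint A S) : f (S ∪ A) ≤ f S + ∑ v ∈ A, (f (insert v S) - f S) := by
  induction A using Finset.induction_on with
  | empty => simp
  | @insert a A haA ih =>
    rw [disjoint_insert_left] at hAS
    have hstep : f (insert a (S ∪ A)) - f (S ∪ A) ≤ f (insert a S) - f S :=
      hf S (S ∪ A) a subset_union_left (by simp [hAS.1, haA])
    rw [union_insert, sum_insert haA]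
    linarith [ih hAS.2]

theorem marginal_sdiff_singleton_le (hf : Submodular f) {T U : Finset V} (hTU : T ⊆ U)
    {b : V} (hb : b ∈ T) : f U - f (U \ {b}) ≤ f T - f (T \ {b}) := by
  have h := hf (T \ {b}) (U \ {b}) b (sdiff_subset_sdiff hTU le_rfl) (by simp)
  simpa only [← erase_eq, insert_erase (hTU hb), insert_erase hb] using h

theorem sdiff_add_sum_marginal_le (hf : Submodular f) {T U : Finset V} (hTU : T ⊆ U)
    {B : Finset V} (hBT : B ⊆ T) : f (T \ B) + ∑ v ∈ B, (f U - f (U \ {v})) ≤ f T := by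
  induction B using Finset.induction_on generalizing T with
  | empty => simp
  | @insert b B hbB ih =>
    rw [insert_subset_iff] at hBT
    have hBT' : B ⊆ T \ {b} := subset_sdiff.2 ⟨hBT.2, disjoint_singleton_right.2 hbB⟩
    have hrest := ih (sdiff_subset.trans hTU) hBT'
    rw [sdiff_sdiff_left, sup_eq_union, ← insert_eq] at hrest
    rw [sum_insert hbB]
    linarith [hf.marginal_sdiff_singleton_le hTU hBT.1]

end Submodular

theorem modular_upper_bound_one {V : Type*} [Fintype V] [DecidableEq V]
    (f : Finset V → ℝ) (hf : Submodular f) (X Y : Finset V) :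
    f Y ≤ f X - ∑ v ∈ X \ Y, (f Finset.univ - f (Finset.univ \ {v}))
            + ∑ v ∈ Y \ X, (f (insert v X) - f X) ∧
    (Y = X → f Y = f X - ∑ v ∈ X \ Y, (f Finset.univ - f (Finset.univ \ {v}))
            + ∑ v ∈ Y \ X, (f (insert v X) - f X)) := by
  refine ⟨?_, fun h ↦ by subst h; simp⟩
  have hadd := hf.union_le_add_sum_marginal X (sdiff_disjoint : Disjoint (Y \ X) X)
  have hremove := hf.sdiff_add_sum_marginal_le (subset_univ (X ∪ Y))
    (sdiff_subset.trans subset_union_left : X \ Y ⊆ X ∪ Y)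
  rw [union_sdiff_self_eq_union] at hadd
  have hY : (X ∪ Y) \ (X \ Y) = Y := by
    ext x; simp only [mem_sdiff, mem_union]; tauto
  rw [hY] at hremove
  linarith
end

section
/- Let f : 2^V → ℝ be submodular and X, Y ⊆ V. Then m_X^2(Y) := f(X) − Σ_{v ∈ X \ Y} (f(X) − f(X \ {v})) + Σ_{v ∈ Y \ X} f({v}) − |Y \ X| · f(∅) satisfies m_X^2(Y) ≥ f(Y), with equality when Y = X. -/
/-!
Split `Y` as `(X ∩ Y) ∪ (Y \ X)`. Removing the elements of `X \ Y` from `X` one by one, each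
step loses at least the marginal value `f X - f (X \ {v})` of `v` at the top, so
`f (X ∩ Y) ≤ f X - ∑ v ∈ X \ Y, (f X - f (X \ {v}))`. Adding the elements of `Y \ X` to `X ∩ Y`
one by one, each step gains at most the marginal value `f {v} - f ∅` of `v` at the bottom.
-/

open Finset

namespace Submodular

variable {V : Type*} [DecidableEq V] {f : Finset V → ℝ}

theorem sub_erase_le (hf : Submodular f) {S T : Finset V} {a : V} (hST : S ⊆ T) (ha : a ∈ S) :
    f T - f (T.erase a) ≤ f S - f (S.erase a) := by
  have h := hf (S.erase a) (T.erase a) a (erase_subset_erase a hST) (notMem_erase a T)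
  rwa [insert_erase (hST ha), insert_erase ha] at h

theorem sum_sub_sdiff_singleton_le (hf : Submodular f) {X S : Finset V} (hSX : S ⊆ X) :
    ∑ v ∈ S, (f X - f (X \ {v})) ≤ f X - f (X \ S) := by
  induction S using Finset.induction_on with
  | empty => simp
  | @insert a S ha ih =>
    have haX : a ∈ X := hSX (mem_insert_self a S)
    have hstep : f X - f (X.erase a) ≤ f (X \ S) - f ((X \ S).erase a) :=
      hf.sub_erase_le sdiff_subset (mem_sdiff.mpr ⟨haX, ha⟩)
    rw [sum_insert ha, sdiff_insert, sdiff_singleton_eq_erase]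
    linarith [ih ((subset_insert a S).trans hSX)]

theorem le_add_sum_sub_empty (hf : Submodular f) {S T : Finset V} (hST : Disjoint S T) :
    f (T ∪ S) ≤ f T + ∑ v ∈ S, (f {v} - f ∅) := by
  induction S using Finset.induction_on with
  | empty => simp
  | @insert a S ha ih =>
    have haT : a ∉ T ∪ S := by
      simp only [mem_union, not_or]
      exact ⟨disjoint_left.mp hST (mem_insert_self a S), ha⟩
    have hstep := hf ∅ (T ∪ S) a (empty_subset _) haT
    rw [insert_empty_eq] at hstep
    rw [union_insert, sum_insert ha]
    linarith [ih (disjoint_of_subset_left (subset_insert a S) hST)]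

end Submodular

theorem modular_upper_bound_two_general {V : Type*} [DecidableEq V]
    (f : Finset V → ℝ) (hf : Submodular f) (X Y : Finset V) :
    f Y ≤ f X - ∑ v ∈ X \ Y, (f X - f (X \ {v}))
            + ∑ v ∈ Y \ X, f {v} - (Y \ X).card * f ∅ ∧
    (Y = X → f Y = f X - ∑ v ∈ X \ Y, (f X - f (X \ {v}))
            + ∑ v ∈ Y \ X, f {v} - (Y \ X).card * f ∅) := by
  refine ⟨?_, fun h => by simp [h]⟩
  have hremove := hf.sum_sub_sdiff_singleton_le (sdiff_subset : X \ Y ⊆ X)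
  have hadd := hf.le_add_sum_sub_empty
    (sdiff_disjoint.mono_right inter_subset_right : Disjoint (Y \ X) (Y ∩ X))
  rw [sdiff_sdiff_self_left, inter_comm] at hremove
  rw [union_comm, sdiff_union_inter, sum_sub_distrib, sum_const, nsmul_eq_mul] at hadd
  linarith

theorem modular_upper_bound_two {V : Type*} [Fintype V] [DecidableEq V]
    (f : Finset V → ℝ) (hf : Submodular f) (X Y : Finset V) :
    f Y ≤ f X - ∑ v ∈ X \ Y, (f X - f (X \ {v}))
            + ∑ v ∈ Y \ X, f {v} - (Y \ X).card * f ∅ ∧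
    (Y = X → f Y = f X - ∑ v ∈ X \ Y, (f X - f (X \ {v}))
            + ∑ v ∈ Y \ X, f {v} - (Y \ X).card * f ∅) :=
  modular_upper_bound_two_general f hf X Y
end

section
/- Let f : 2^V → ℝ be submodular, A ⊆ X ⊆ B ⊆ V, and A ⊆ Y ⊆ B. Define m_X^4(Y) := f(X) − Σ_{v ∈ X \ Y} (f(X) − f(X \ {v})) + Σ_{v ∈ Y \ X} (f(A ∪ {v}) − f(A)). Then f(Y) ≤ m_X^4(Y) ≤ m_X^2(Y), where m_X^2(Y) := f(X) − Σ_{v ∈ X \ Y} (f(X) − f(X \ {v})) + Σ_{v ∈ Y \ X} (f({v}) − f(∅)); moreover m_X^4(X) = f(X). -/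
/-!
Both inequalities are telescoping applications of diminishing returns. Removing the elements
of `X \ Y` from `X` one at a time costs at least the marginal loss `f X - f (X \ {v})` of each,
since each is removed from a subset of `X`; adding the elements of `Y \ X` to `X ∩ Y ⊇ A` one at
a time gains at most their marginal gain over `A`, which in turn is at most their gain over `∅`.
-/

open Finset

namespace Submodular

variable {V : Type*} [DecidableEq V] {f : Finset V → ℝ}

theorem le_sub_sum_of_subset (hf : Submodular f) {X D : Finset V} (hD : D ⊆ X) :
    f (X \ D) ≤ f X - ∑ v ∈ D, (f X - f (X \ {v})) := by
  induction D using Finset.induction with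
  | empty => simp
  | @insert a D ha ih =>
    obtain ⟨haX, hDX⟩ := insert_subset_iff.mp hD
    have haXD : a ∈ X \ D := mem_sdiff.mpr ⟨haX, ha⟩
    have step := hf ((X \ D).erase a) (X.erase a) a (erase_subset_erase a sdiff_subset)
      (notMem_erase a X)
    rw [insert_erase haX, insert_erase haXD] at step
    rw [sdiff_insert, sum_insert ha, sdiff_singleton_eq_erase]
    linarith [ih hDX]

theorem union_le_add_sum (hf : Submodular f) {A S D : Finset V} (hAS : A ⊆ S)
    (hDS : Disjoint D S) : f (S ∪ D) ≤ f S + ∑ v ∈ D, (f (insert v A) - f A) := by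
  induction D using Finset.induction with
  | empty => simp
  | @insert a D ha ih =>
    obtain ⟨haS, hDS⟩ := disjoint_insert_left.mp hDS
    have step := hf A (S ∪ D) a (hAS.trans subset_union_left) (by simp [haS, ha])
    rw [union_insert, sum_insert ha]
    linarith [ih hDS]

theorem insert_sub_le_singleton_sub (hf : Submodular f) {A : Finset V} {v : V} (hv : v ∉ A) :
    f (insert v A) - f A ≤ f {v} - f ∅ := by
  simpa using hf ∅ A v (empty_subset A) hv

end Submodular

theorem modular_upper_bound_four_general {V : Type*} [DecidableEq V]
    (f : Finset V → ℝ) (hf : Submodular f) (A X Y : Finset V)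
    (hAX : A ⊆ X) (hAY : A ⊆ Y) :
    (f Y ≤ f X - ∑ v ∈ X \ Y, (f X - f (X \ {v}))
            + ∑ v ∈ Y \ X, (f (insert v A) - f A)) ∧
    (f X - ∑ v ∈ X \ Y, (f X - f (X \ {v}))
            + ∑ v ∈ Y \ X, (f (insert v A) - f A)
      ≤ f X - ∑ v ∈ X \ Y, (f X - f (X \ {v}))
            + ∑ v ∈ Y \ X, (f {v} - f ∅)) ∧
    (f X - ∑ v ∈ X \ X, (f X - f (X \ {v}))
            + ∑ v ∈ X \ X, (f (insert v A) - f A) = f X) := by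
  refine ⟨?_, ?_, by simp⟩
  · have removal := hf.le_sub_sum_of_subset (sdiff_subset (s := X) (t := Y))
    have addition := hf.union_le_add_sum (subset_inter hAY hAX) (disjoint_sdiff_inter Y X)
    rw [sdiff_sdiff_self_left, inter_comm] at removal
    rw [show Y ∩ X ∪ Y \ X = Y from sup_inf_sdiff Y X] at addition
    linarith
  · gcongr _ + ∑ v ∈ _, ?_ with v hv
    exact hf.insert_sub_le_singleton_sub fun hvA => (mem_sdiff.mp hv).2 (hAX hvA)

theorem modular_upper_bound_four {V : Type*} [Fintype V] [DecidableEq V]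
    (f : Finset V → ℝ) (hf : Submodular f) (A B X Y : Finset V)
    (hAX : A ⊆ X) (hXB : X ⊆ B) (hAY : A ⊆ Y) (hYB : Y ⊆ B) :
    (f Y ≤ f X - ∑ v ∈ X \ Y, (f X - f (X \ {v}))
            + ∑ v ∈ Y \ X, (f (insert v A) - f A)) ∧
    (f X - ∑ v ∈ X \ Y, (f X - f (X \ {v}))
            + ∑ v ∈ Y \ X, (f (insert v A) - f A)
      ≤ f X - ∑ v ∈ X \ Y, (f X - f (X \ {v}))
            + ∑ v ∈ Y \ X, (f {v} - f ∅)) ∧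
    (f X - ∑ v ∈ X \ X, (f X - f (X \ {v}))
            + ∑ v ∈ X \ X, (f (insert v A) - f A) = f X) :=
  modular_upper_bound_four_general f hf A X Y hAX hAY
end

section
/- Let f : 2^V → ℝ be submodular with f(∅) = 0. Let π be a permutation (enumeration v_1, …, v_n) of V and define the chain S_i = {v_1, …, v_i} with S_0 = ∅. Define h(v_i) = f(S_i) − f(S_{i−1}) and h(Y) = Σ_{v ∈ Y} h(v). Then h(Y) ≤ f(Y) for every Y ⊆ V, and h(S_i) = f(S_i) for every i (in particular h is tight on every prefix of the chain). -/
/-! Induct along the chain. Adding `vᵢ` to `Y ∩ Sᵢ₋₁ ⊆ Sᵢ₋₁` gains at least `f(Sᵢ) − f(Sᵢ₋₁) = h(vᵢ)`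
by submodularity, so `h(Y ∩ Sᵢ) ≤ f(Y ∩ Sᵢ)` propagates from `i = 0` to `i = n`, where
`Y ∩ Sₙ = Y`; on the prefixes themselves the sum of the increments telescopes. -/

open Finset

section Chain

variable {V : Type*} [DecidableEq V] {n : ℕ} (e : Fin n ≃ V)

def chainPrefix (i : ℕ) : Finset V :=
  (univ.filter fun j : Fin n => (j : ℕ) < i).image e

def greedyWeight (f : Finset V → ℝ) (v : V) : ℝ :=
  f (chainPrefix e ((e.symm v : ℕ) + 1)) - f (chainPrefix e (e.symm v))

variable {e}

theorem mem_chainPrefix {i : ℕ} {v : V} : v ∈ chainPrefix e i ↔ (e.symm v : ℕ) < i := by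
  simp only [chainPrefix, mem_image, mem_filter, mem_univ, true_and]
  constructor
  · rintro ⟨j, hj, rfl⟩
    rwa [Equiv.symm_apply_apply]
  · exact fun hv => ⟨e.symm v, hv, e.apply_symm_apply v⟩

@[simp]
theorem chainPrefix_zero : chainPrefix e 0 = ∅ := by
  ext v
  simp [mem_chainPrefix]

theorem chainPrefix_self [Fintype V] : chainPrefix e n = univ := by
  ext v
  simp [mem_chainPrefix]

theorem chainPrefix_succ (i : Fin n) :
    chainPrefix e (i + 1) = insert (e i) (chainPrefix e i) := by
  ext v
  rw [mem_insert, mem_chainPrefix, mem_chainPrefix, Nat.lt_succ_iff_lt_or_eq, ← Fin.ext_iff,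
    Equiv.symm_apply_eq, or_comm]

theorem apply_notMem_chainPrefix (i : Fin n) : e i ∉ chainPrefix e i := by
  simp [mem_chainPrefix]

theorem greedyWeight_apply (f : Finset V → ℝ) (i : Fin n) :
    greedyWeight e f (e i) = f (chainPrefix e (i + 1)) - f (chainPrefix e i) := by
  simp [greedyWeight]

variable {f : Finset V → ℝ}

theorem sum_greedyWeight_chainPrefix (hf0 : f ∅ = 0) {i : ℕ} (hi : i ≤ n) :
    ∑ v ∈ chainPrefix e i, greedyWeight e f v = f (chainPrefix e i) := by
  induction i with
  | zero => simp [hf0]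
  | succ i ih =>
    have hsucc := chainPrefix_succ (e := e) ⟨i, hi⟩
    rw [hsucc, sum_insert (apply_notMem_chainPrefix _), ih (by omega), greedyWeight_apply, hsucc]
    ring

theorem Submodular.sum_greedyWeight_inter_chainPrefix_le (hf : Submodular f) (hf0 : f ∅ = 0)
    (Y : Finset V) {i : ℕ} (hi : i ≤ n) :
    ∑ v ∈ Y ∩ chainPrefix e i, greedyWeight e f v ≤ f (Y ∩ chainPrefix e i) := by
  induction i with
  | zero => simp [hf0]
  | succ i ih =>
    have ih := ih (by omega)
    set k : Fin n := ⟨i, hi⟩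
    have hk : e k ∉ chainPrefix e i := apply_notMem_chainPrefix k
    rw [chainPrefix_succ k]
    by_cases hkY : e k ∈ Y
    · have hmarginal := hf (Y ∩ chainPrefix e i) _ (e k) inter_subset_right hk
      rw [inter_insert_of_mem hkY, sum_insert fun h => hk (mem_inter.1 h).2,
        greedyWeight_apply, chainPrefix_succ k]
      linarith
    · rwa [inter_insert_of_notMem hkY]

end Chain

theorem modular_lower_bound_chain {V : Type*} [Fintype V] [DecidableEq V]
    (f : Finset V → ℝ) (hf : Submodular f) (hf0 : f ∅ = 0)
    (e : Fin (Fintype.card V) ≃ V)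
    (S : ℕ → Finset V)
    (hS : ∀ i : ℕ, S i = (Finset.univ.filter (fun j : Fin (Fintype.card V) => (j : ℕ) < i)).image e)
    (h : V → ℝ)
    (hh : ∀ v : V, h v = f (S ((e.symm v : ℕ) + 1)) - f (S (e.symm v : ℕ))) :
    (∀ Y : Finset V, ∑ v ∈ Y, h v ≤ f Y) ∧
    (∀ i : ℕ, i ≤ Fintype.card V → ∑ v ∈ S i, h v = f (S i)) := by
  obtain rfl : S = chainPrefix e := funext hS
  obtain rfl : h = greedyWeight e f := funext hh
  refine ⟨fun Y => ?_, fun i hi => sum_greedyWeight_chainPrefix hf0 hi⟩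
  simpa [chainPrefix_self] using hf.sum_greedyWeight_inter_chainPrefix_le hf0 Y le_rfl
end

section
/- Let Z_1, …, Z_θ be i.i.d. random variables in [0,1] with mean λ, let Λ = Σ_i Z_i, and let δ ∈ (0,1); set a = 4(e−2)ln(2/δ). Assuming the concentration bounds Pr[Λ − θλ ≥ ε] ≤ exp(−ε²/(4(e−2)θλ)) and Pr[Λ − θλ ≤ −ε] ≤ exp(−ε²/(4(e−2)θλ)) for every ε > 0, we have Pr[θλ ≥ (√(Λ + 0.25a) − 0.5√a)²] ≥ 1 − δ/2 and Pr[θλ ≤ (√(Λ + 0.25a) + 0.5√a)²] ≥ 1 − δ/2. -/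
/-!
Write `μ = θλ`. The event `Λ - μ < √(aμ)` is a quadratic inequality in `√μ` whose positive root is
`√(Λ + a/4) - √a/2`, and symmetrically for the lower tail, so each confidence bound fails only on a
Chernoff tail event with `ε = √(aμ)`. For this `ε` the Chernoff exponent is `a / (4(e-2)) = ln(2/δ)`,
so each tail has probability at most `δ/2`.
-/

open MeasureTheory Real

theorem ofReal_one_sub_le_of_measure_compl_le {Ω : Type*} [MeasurableSpace Ω] {P : Measure Ω}
    [IsProbabilityMeasure P] {s : Set Ω} {r : ℝ} (hr : 0 ≤ r) (hs : P sᶜ ≤ ENNReal.ofReal r) :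
    ENNReal.ofReal (1 - r) ≤ P s := by
  have hcover : 1 ≤ P s + ENNReal.ofReal r :=
    calc (1 : ENNReal) = P (s ∪ sᶜ) := by simp
      _ ≤ P s + P sᶜ := measure_union_le _ _
      _ ≤ P s + ENNReal.ofReal r := by gcongr
  rw [ENNReal.ofReal_sub _ hr, ENNReal.ofReal_one]
  exact tsub_le_iff_right.mpr hcover

theorem sqrt_sub_half_sqrt_sq {μ a : ℝ} (hμ : 0 ≤ μ) (ha : 0 ≤ a) :
    (√μ - 0.5 * √a) ^ 2 = μ - √(a * μ) + 0.25 * a := by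
  rw [sqrt_mul ha]
  linear_combination sq_sqrt hμ + 0.25 * sq_sqrt ha

theorem sqrt_add_half_sqrt_sq {μ a : ℝ} (hμ : 0 ≤ μ) (ha : 0 ≤ a) :
    (√μ + 0.5 * √a) ^ 2 = μ + √(a * μ) + 0.25 * a := by
  rw [sqrt_mul ha]
  linear_combination sq_sqrt hμ + 0.25 * sq_sqrt ha

theorem sqrt_add_sub_half_sqrt_sq_le {L μ a : ℝ} (hL : 0 ≤ L) (hμ : 0 ≤ μ) (ha : 0 ≤ a)
    (h : L - μ ≤ √(a * μ)) : (√(L + 0.25 * a) - 0.5 * √a) ^ 2 ≤ μ := by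
  have hlow : 0.5 * √a ≤ √(L + 0.25 * a) := by
    rw [le_sqrt (by positivity) (by positivity)]
    linear_combination hL + 0.25 * (sq_sqrt ha).le
  have hup : √(L + 0.25 * a) ≤ √μ + 0.5 * √a := by
    rw [sqrt_le_left (by positivity), sqrt_add_half_sqrt_sq hμ ha]
    linarith
  calc (√(L + 0.25 * a) - 0.5 * √a) ^ 2 ≤ √μ ^ 2 :=
        pow_le_pow_left₀ (sub_nonneg.mpr hlow) (by linarith) 2
    _ = μ := sq_sqrt hμ

theorem le_sqrt_add_add_half_sqrt_sq {L μ a : ℝ} (hμ : 0 ≤ μ) (ha : 0 ≤ a)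
    (h : -√(a * μ) ≤ L - μ) : μ ≤ (√(L + 0.25 * a) + 0.5 * √a) ^ 2 := by
  have hroot : √μ - 0.5 * √a ≤ √(L + 0.25 * a) :=
    (le_abs_self _).trans <| abs_le_sqrt <| by rw [sqrt_sub_half_sqrt_sq hμ ha]; linarith
  calc μ = √μ ^ 2 := (sq_sqrt hμ).symm
    _ ≤ (√(L + 0.25 * a) + 0.5 * √a) ^ 2 :=
        pow_le_pow_left₀ (sqrt_nonneg μ) (by linarith) 2

theorem chernoff_to_confidence_bounds_general
    {Ω : Type*} [MeasurableSpace Ω] (P : Measure Ω) [IsProbabilityMeasure P]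
    (θ : ℕ) (hθ : 0 < θ) (δ : ℝ) (hδ0 : 0 < δ) (hδ1 : δ < 1)
    (Z : Fin θ → Ω → ℝ) (hZrange : ∀ i ω, Z i ω ∈ Set.Icc (0 : ℝ) 1)
    (lam : ℝ) (hlam : 0 < lam)
    (Λ : Ω → ℝ) (hΛ : ∀ ω, Λ ω = ∑ i, Z i ω)
    (a : ℝ) (ha : a = 4 * (Real.exp 1 - 2) * Real.log (2 / δ))
    (hChernoffUp : ∀ ε : ℝ, 0 < ε →
      P {ω | Λ ω - θ * lam ≥ ε} ≤
        ENNReal.ofReal (Real.exp (-(ε ^ 2) / (4 * (Real.exp 1 - 2) * θ * lam))))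
    (hChernoffLow : ∀ ε : ℝ, 0 < ε →
      P {ω | Λ ω - θ * lam ≤ -ε} ≤
        ENNReal.ofReal (Real.exp (-(ε ^ 2) / (4 * (Real.exp 1 - 2) * θ * lam)))) :
    P {ω | θ * lam ≥ (Real.sqrt (Λ ω + 0.25 * a) - 0.5 * Real.sqrt a) ^ 2} ≥
      ENNReal.ofReal (1 - δ / 2) ∧
    P {ω | θ * lam ≤ (Real.sqrt (Λ ω + 0.25 * a) + 0.5 * Real.sqrt a) ^ 2} ≥
      ENNReal.ofReal (1 - δ / 2) := by
  have he : 0 < exp 1 - 2 := by linarith [exp_one_gt_d9]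
  have hlog : 0 < log (2 / δ) := log_pos (by rw [lt_div_iff₀ hδ0]; linarith)
  have ha0 : 0 < a := ha ▸ by positivity
  have hμ : 0 < θ * lam := by positivity
  have hΛ0 (ω : Ω) : 0 ≤ Λ ω := hΛ ω ▸ Finset.sum_nonneg fun i _ => (hZrange i ω).1
  set ε := √(a * (θ * lam))
  have hε : 0 < ε := sqrt_pos.mpr (mul_pos ha0 hμ)
  have htail : exp (-(ε ^ 2) / (4 * (exp 1 - 2) * θ * lam)) = δ / 2 := by
    have hexponent : -(ε ^ 2) / (4 * (exp 1 - 2) * θ * lam) = -log (2 / δ) := by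
      rw [sq_sqrt (mul_pos ha0 hμ).le, ha]
      field_simp
    rw [hexponent, exp_neg, exp_log (by positivity), inv_div]
  constructor
  · refine ofReal_one_sub_le_of_measure_compl_le (by positivity) <|
      (measure_mono fun ω hω => ?_).trans (htail ▸ hChernoffUp ε hε)
    exact not_lt.mp fun hlt => hω (sqrt_add_sub_half_sqrt_sq_le (hΛ0 ω) hμ.le ha0.le hlt.le)
  · refine ofReal_one_sub_le_of_measure_compl_le (by positivity) <|
      (measure_mono fun ω hω => ?_).trans (htail ▸ hChernoffLow ε hε)
    exact not_lt.mp fun hlt => hω (le_sqrt_add_add_half_sqrt_sq hμ.le ha0.le hlt.le)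

theorem chernoff_to_confidence_bounds
    {Ω : Type*} [MeasurableSpace Ω] (P : Measure Ω) [IsProbabilityMeasure P]
    (θ : ℕ) (hθ : 0 < θ) (δ : ℝ) (hδ0 : 0 < δ) (hδ1 : δ < 1)
    (Z : Fin θ → Ω → ℝ) (hZrange : ∀ i ω, Z i ω ∈ Set.Icc (0 : ℝ) 1)
    (lam : ℝ) (hlam : 0 < lam) (hmean : ∀ i, ∫ ω, Z i ω ∂P = lam)
    (Λ : Ω → ℝ) (hΛ : ∀ ω, Λ ω = ∑ i, Z i ω)
    (a : ℝ) (ha : a = 4 * (Real.exp 1 - 2) * Real.log (2 / δ))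
    (hChernoffUp : ∀ ε : ℝ, 0 < ε →
      P {ω | Λ ω - θ * lam ≥ ε} ≤
        ENNReal.ofReal (Real.exp (-(ε ^ 2) / (4 * (Real.exp 1 - 2) * θ * lam))))
    (hChernoffLow : ∀ ε : ℝ, 0 < ε →
      P {ω | Λ ω - θ * lam ≤ -ε} ≤
        ENNReal.ofReal (Real.exp (-(ε ^ 2) / (4 * (Real.exp 1 - 2) * θ * lam)))) :
    P {ω | θ * lam ≥ (Real.sqrt (Λ ω + 0.25 * a) - 0.5 * Real.sqrt a) ^ 2} ≥
      ENNReal.ofReal (1 - δ / 2) ∧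
    P {ω | θ * lam ≤ (Real.sqrt (Λ ω + 0.25 * a) + 0.5 * Real.sqrt a) ^ 2} ≥
      ENNReal.ofReal (1 - δ / 2) :=
  chernoff_to_confidence_bounds_general P θ hθ δ hδ0 hδ1 Z hZrange lam hlam Λ hΛ a ha hChernoffUp
    hChernoffLow
end

section
/- RR-set estimation identity: let V be a finite set with nonnegative weights b : V → ℝ, Υ_b = Σ_v b(v) > 0, and let R be a random set generated by first choosing v ∈ V with probability b(v)/Υ_b and then taking R = R_g(v) for a random sample g, where R_g(v) = {u : v ∈ V_g({u})} is the set of nodes that reach v in sample g. Then for every seed set S ⊆ V, the weighted coverage β(S) = E_g[Σ_{v ∈ V_g(S)} b(v)] equals Υ_b · Pr[S ∩ R ≠ ∅], provided v ∈ V_g(S) ⇔ S ∩ R_g(v) ≠ ∅ for every g and v. -/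
open Finset

theorem Finset.sum_eq_sum_ite_of_mem_iff {ι M : Type*} [Fintype ι] [AddCommMonoid M]
    {T : Finset ι} {P : ι → Prop} [DecidablePred P] (hT : ∀ i, i ∈ T ↔ P i) (f : ι → M) :
    ∑ i ∈ T, f i = ∑ i, if P i then f i else 0 := by
  rw [← Finset.sum_filter]
  exact Finset.sum_congr (by ext i; simp [hT]) fun _ _ => rfl

theorem rr_set_estimation_identity_general
    {V : Type*} [Fintype V] [DecidableEq V]
    {G : Type*} [Fintype G]
    (p : G → ℝ)
    (Vg : G → Finset V → Finset V)
    (b : V → ℝ)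
    (Υ : ℝ) (hΥpos : 0 < Υ)
    (R : G → V → Finset V)
    (hequiv : ∀ (g : G) (v : V) (S : Finset V), v ∈ Vg g S ↔ (S ∩ R g v).Nonempty)
    (S : Finset V) :
    ∑ g, p g * ∑ v ∈ Vg g S, b v =
      Υ * ∑ g, ∑ v, p g * (b v / Υ) *
        (if (S ∩ R g v).Nonempty then (1 : ℝ) else 0) := by
  have hcoverage : ∀ g, ∑ v ∈ Vg g S, b v =
      ∑ v, if (S ∩ R g v).Nonempty then b v else 0 := fun g =>
    Finset.sum_eq_sum_ite_of_mem_iff (fun v => hequiv g v S) b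
  simp_rw [hcoverage, Finset.mul_sum]
  refine Finset.sum_congr rfl fun g _ => Finset.sum_congr rfl fun v _ => ?_
  split_ifs
  · field_simp
  · simp

theorem rr_set_estimation_identity
    {V : Type*} [Fintype V] [DecidableEq V]
    {G : Type*} [Fintype G]
    (p : G → ℝ) (hp : ∀ g, 0 ≤ p g) (hp1 : ∑ g, p g = 1)
    (Vg : G → Finset V → Finset V)
    (b : V → ℝ) (hb : ∀ v, 0 ≤ b v)
    (Υ : ℝ) (hΥdef : Υ = ∑ v, b v) (hΥpos : 0 < Υ)
    (R : G → V → Finset V)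
    (hR : ∀ g v, R g v = Finset.univ.filter (fun u => v ∈ Vg g {u}))
    (hequiv : ∀ (g : G) (v : V) (S : Finset V), v ∈ Vg g S ↔ (S ∩ R g v).Nonempty)
    (S : Finset V) :
    ∑ g, p g * ∑ v ∈ Vg g S, b v =
      Υ * ∑ g, ∑ v, p g * (b v / Υ) *
        (if (S ∩ R g v).Nonempty then (1 : ℝ) else 0) :=
  rr_set_estimation_identity_general p Vg b Υ hΥpos R hequiv S
end
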